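/- arXiv:0709.2340 — 2 statements merged into one kernel-verified Lean document; each statement's English description precedes it below -/
import Mathlib

section
/- Let {W_i}_{i=1}^N be a tight fusion frame for ℝ^M with Σ_{ℓ=1}^N P_ℓ = A·I, A = (1/M) Σ_{ℓ=1}^N m_ℓ, m_ℓ = dim W_ℓ, and let σ_x, σ_n > 0. If only the i-th subspace is erased, the total MSE of the no-erasure LMMSE estimator equals M σ_x² σ_n² / (σ_n² + σ_x² A) + σ_x⁴ (σ_x² + σ_n²) m_i / (σ_n² + σ_x² A)². Equivalently, the extra MSE due to erasure of W_i is α² (σ_x² + σ_n²) m_i with α = σ_x²/(A σ_x² + σ_n²); in particular it is proportional to the dimension m_i of the erased subspace. -/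
/-! Tightness turns the inverse error covariance `σₓ⁻² I + σₙ⁻² ∑ Pₗ` into the scalar matrix
`(σₓ⁻² + A σₙ⁻²) I`, whose inverse has trace `M σₓ² σₙ² / (σₙ² + σₓ² A)`. For the erasure term,
`Pᵢ² = Pᵢ` and the trace of an idempotent matrix is the dimension of its range. -/

open Matrix BigOperators

namespace Matrix

variable {n K : Type*} [Fintype n] [DecidableEq n] [Field K]

theorem trace_eq_finrank_range_of_isIdempotentElem {P : Matrix n n K} (hP : IsIdempotentElem P) :
    P.trace = (Module.finrank K (LinearMap.range P.mulVecLin) : K) :=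
  (trace_toLin'_eq P).symm.trans
    ((LinearMap.isProj_range_iff_isIdempotentElem _).mpr (hP.map toLinAlgEquiv')).trace

theorem trace_smul_mul_self_add_smul_of_isIdempotentElem {P : Matrix n n K}
    (hP : IsIdempotentElem P) (a b : K) :
    (a • (P * P) + b • P).trace = (a + b) * Module.finrank K (LinearMap.range P.mulVecLin) := by
  rw [hP.eq, ← add_smul, trace_smul, trace_eq_finrank_range_of_isIdempotentElem hP, smul_eq_mul]

theorem inv_smul_one (c : K) : (c • (1 : Matrix n n K))⁻¹ = c⁻¹ • 1 := by
  rcases eq_or_ne c 0 with rfl | hc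
  · simp
  · exact inv_eq_left_inv (by rw [smul_mul_smul_comm, one_mul, inv_mul_cancel₀ hc, one_smul])

theorem trace_inv_inv_smul_one_add_inv_smul_smul_one {a b : K} (ha : a ≠ 0) (hb : b ≠ 0) (A : K) :
    ((a⁻¹ • 1 + b⁻¹ • A • 1 : Matrix n n K)⁻¹).trace =
      Fintype.card n * (a * b / (b + a * A)) := by
  have hscalar : a⁻¹ + b⁻¹ * A = (b + a * A) / (a * b) := by field_simp
  rw [smul_smul, ← add_smul, hscalar, inv_smul_one, inv_div, trace_smul, trace_one, smul_eq_mul,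
    mul_comm]

end Matrix

theorem one_erasure_mse_general {M N : ℕ} (A : ℝ)
    (σx σn : ℝ) (hσx : 0 < σx) (hσn : 0 < σn)
    (W : Fin N → Submodule ℝ (Fin M → ℝ))
    (P : Fin N → Matrix (Fin M) (Fin M) ℝ)
    (hP : ∀ i, (P i).IsSymm ∧ P i * P i = P i ∧
      LinearMap.range (P i).mulVecLin = W i)
    (htight : ∑ ℓ, P ℓ = A • (1 : Matrix (Fin M) (Fin M) ℝ))
    (i : Fin N)
    (α : ℝ) (hα : α = σx ^ 2 / (A * σx ^ 2 + σn ^ 2)) :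
    Matrix.trace (((σx ^ 2)⁻¹ • (1 : Matrix (Fin M) (Fin M) ℝ) +
          (σn ^ 2)⁻¹ • ∑ ℓ, P ℓ)⁻¹) +
        α ^ 2 * Matrix.trace (σx ^ 2 • (P i * P i) + σn ^ 2 • P i) =
      (M : ℝ) * σx ^ 2 * σn ^ 2 / (σn ^ 2 + σx ^ 2 * A) +
        σx ^ 4 * (σx ^ 2 + σn ^ 2) * (Module.finrank ℝ (W i) : ℝ) /
          (σn ^ 2 + σx ^ 2 * A) ^ 2 ∧
    α ^ 2 * Matrix.trace (σx ^ 2 • (P i * P i) + σn ^ 2 • P i) =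
      α ^ 2 * (σx ^ 2 + σn ^ 2) * (Module.finrank ℝ (W i) : ℝ) := by
  obtain ⟨-, hidem, hrange⟩ := hP i
  have hextra : α ^ 2 * Matrix.trace (σx ^ 2 • (P i * P i) + σn ^ 2 • P i) =
      α ^ 2 * (σx ^ 2 + σn ^ 2) * (Module.finrank ℝ (W i) : ℝ) := by
    rw [trace_smul_mul_self_add_smul_of_isIdempotentElem hidem, hrange, mul_assoc]
  refine ⟨?_, hextra⟩
  rw [hextra, htight, trace_inv_inv_smul_one_add_inv_smul_smul_one (by positivity) (by positivity),
    Fintype.card_fin, hα, div_pow]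
  ring

/-- For a tight fusion frame `∑ₗ Pₗ = A • I` with
`A = (1/M) ∑ₗ mₗ`, `mₗ = dim W ℓ`, and `σₓ, σₙ > 0`: if only the `i`-th subspace is
erased, the total MSE of the no-erasure LMMSE estimator equals
`M σₓ² σₙ²/(σₙ² + σₓ² A) + σₓ⁴ (σₓ² + σₙ²) mᵢ/(σₙ² + σₓ² A)²`.  Equivalently,
the extra MSE due to the erasure of `W i` equals `α² (σₓ² + σₙ²) mᵢ` with
`α = σₓ²/(A σₓ² + σₙ²)`, proportional to the dimension `mᵢ` of the erased subspace. -/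
theorem one_erasure_mse {M N : ℕ} (hM : 0 < M) (A : ℝ) (hA : 0 < A)
    (σx σn : ℝ) (hσx : 0 < σx) (hσn : 0 < σn)
    (W : Fin N → Submodule ℝ (Fin M → ℝ))
    (P : Fin N → Matrix (Fin M) (Fin M) ℝ)
    (hP : ∀ i, (P i).IsSymm ∧ P i * P i = P i ∧
      LinearMap.range (P i).mulVecLin = W i)
    (htight : ∑ ℓ, P ℓ = A • (1 : Matrix (Fin M) (Fin M) ℝ))
    (hAval : A = (1 / (M : ℝ)) * ∑ ℓ, (Module.finrank ℝ (W ℓ) : ℝ))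
    (i : Fin N)
    (α : ℝ) (hα : α = σx ^ 2 / (A * σx ^ 2 + σn ^ 2)) :
    Matrix.trace (((σx ^ 2)⁻¹ • (1 : Matrix (Fin M) (Fin M) ℝ) +
          (σn ^ 2)⁻¹ • ∑ ℓ, P ℓ)⁻¹) +
        α ^ 2 * Matrix.trace (σx ^ 2 • (P i * P i) + σn ^ 2 • P i) =
      (M : ℝ) * σx ^ 2 * σn ^ 2 / (σn ^ 2 + σx ^ 2 * A) +
        σx ^ 4 * (σx ^ 2 + σn ^ 2) * (Module.finrank ℝ (W i) : ℝ) /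
          (σn ^ 2 + σx ^ 2 * A) ^ 2 ∧
    α ^ 2 * Matrix.trace (σx ^ 2 • (P i * P i) + σn ^ 2 • P i) =
      α ^ 2 * (σx ^ 2 + σn ^ 2) * (Module.finrank ℝ (W i) : ℝ) :=
  one_erasure_mse_general A σx σn hσx hσn W P hP htight i α hα
end

section
/- Let N ≥ 2 and let {W_i}_{i=1}^N be a tight fusion frame for ℝ^M consisting of m-dimensional subspaces whose pairwise chordal distances are all equal to a common value d_c. Then d_c² = (m(M−m)/M) · (N/(N−1)); that is, the common squared chordal distance attains the simplex bound. -/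
open Matrix BigOperators

/-- The Frobenius norm of a real square matrix. -/
noncomputable def frobeniusNorm {M : ℕ} (X : Matrix (Fin M) (Fin M) ℝ) : ℝ :=
  Real.sqrt (Matrix.trace (Xᵀ * X))

/-- The chordal distance between two subspaces of `ℝ^M`, expressed in terms of their
orthogonal projection matrices: `d_c = (1/√2) ‖Q_V − Q_W‖_F`. -/
noncomputable def chordalDist {M : ℕ} (Q₁ Q₂ : Matrix (Fin M) (Fin M) ℝ) : ℝ :=
  (1 / Real.sqrt 2) * frobeniusNorm (Q₁ - Q₂)

/-! Take traces in the tight frame identity `∑ Pᵢ = A • 1` and in its square. Since each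
`Pᵢ` is an orthogonal projection of rank `m`, `tr Pᵢ = m` and `tr (Pᵢ Pⱼ) = m - d_c²` for
`i ≠ j`, so `A M = N m` and `A² M = N m + N (N - 1) (m - d_c²)`; eliminating `A` gives the
simplex bound. -/

theorem Matrix.trace_eq_finrank_range_of_isIdempotentElem_s15 {K n : Type*} [Field K] [Fintype n]
    [DecidableEq n] {X : Matrix n n K} (hX : IsIdempotentElem X) :
    X.trace = Module.finrank K (LinearMap.range X.mulVecLin) := by
  have h : IsIdempotentElem (Matrix.toLin' X) := hX.map Matrix.toLinAlgEquiv'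
  rw [← Matrix.trace_toLin'_eq, (LinearMap.IsIdempotentElem.isProj_range _ h).trace]
  rfl

theorem frobeniusNorm_sq {M : ℕ} (X : Matrix (Fin M) (Fin M) ℝ) :
    frobeniusNorm X ^ 2 = (Xᵀ * X).trace := by
  refine Real.sq_sqrt ?_
  simpa [conjTranspose_eq_transpose_of_trivial] using
    (posSemidef_conjTranspose_mul_self X).trace_nonneg

theorem chordalDist_sq_of_isSymm_of_isIdempotentElem {M : ℕ} {P Q : Matrix (Fin M) (Fin M) ℝ}
    (hPs : P.IsSymm) (hQs : Q.IsSymm) (hPi : IsIdempotentElem P) (hQi : IsIdempotentElem Q) :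
    chordalDist P Q ^ 2 = (P.trace + Q.trace) / 2 - (P * Q).trace := by
  rw [chordalDist, mul_pow, frobeniusNorm_sq, div_pow, Real.sq_sqrt zero_le_two,
    transpose_sub, hPs.eq, hQs.eq, sub_mul, mul_sub, mul_sub, hPi.eq, hQi.eq]
  simp only [trace_sub, trace_mul_comm Q P]
  ring

theorem Finset.sum_sum_eq_of_diag_of_offDiag {ι R : Type*} [Fintype ι] [DecidableEq ι]
    [CommRing R] {f : ι → ι → R} {a b : R} (hdiag : ∀ i, f i i = a)
    (hoff : ∀ i j, i ≠ j → f i j = b) :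
    ∑ i, ∑ j, f i j = Fintype.card ι * a + Fintype.card ι * (Fintype.card ι - 1) * b := by
  have hrow (i : ι) : ∑ j, f i j = a + (Fintype.card ι - 1) * b := by
    rw [Fintype.sum_eq_add_sum_compl i, hdiag,
      Finset.sum_congr rfl fun j hj => hoff i j (by simpa [eq_comm] using hj)]
    simp [Finset.card_compl, Nat.cast_sub (Fintype.card_pos_iff.mpr ⟨i⟩)]
  simp only [hrow, Finset.sum_const, Finset.card_univ, nsmul_eq_mul]
  ring

theorem eq_simplex_bound_of_trace_identities {A M N m d : ℝ} (hM : 0 < M) (hN : 1 < N)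
    (hfirst : A * M = N * m) (hsecond : A ^ 2 * M = N * m + N * (N - 1) * (m - d)) :
    d = m * (M - m) / M * (N / (N - 1)) := by
  have hN1 : N - 1 ≠ 0 := by linarith
  rw [div_mul_div_comm, eq_div_iff (mul_ne_zero hM.ne' hN1)]
  -- `A` is eliminated through `M · (A² M) = (A M)² = (N m)²`.
  have h : N * (d * (M * (N - 1))) = N * (m * (M - m) * N) := by
    linear_combination M * hsecond - (A * M + N * m) * hfirst
  exact mul_left_cancel₀ (zero_lt_one.trans hN).ne' h

theorem equidistance_tight_meets_simplex_bound_general {M N : ℕ} (hN : 2 ≤ N) (hM : 0 < M)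
    (A : ℝ)
    (W : Fin N → Submodule ℝ (Fin M → ℝ))
    (P : Fin N → Matrix (Fin M) (Fin M) ℝ)
    (hP : ∀ i, (P i).IsSymm ∧ P i * P i = P i ∧
      LinearMap.range (P i).mulVecLin = W i)
    (htight : ∑ i, P i = A • (1 : Matrix (Fin M) (Fin M) ℝ))
    (m : ℕ) (hdim : ∀ i, Module.finrank ℝ (W i) = m)
    (dc : ℝ) (hdc : ∀ i j, i ≠ j → chordalDist (P i) (P j) = dc) :
    dc ^ 2 = ((m : ℝ) * ((M : ℝ) - (m : ℝ)) / (M : ℝ)) * ((N : ℝ) / ((N : ℝ) - 1)) := by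
  have htr (i) : (P i).trace = m := by
    rw [trace_eq_finrank_range_of_isIdempotentElem_s15 (hP i).2.1, (hP i).2.2, hdim]
  have hcross (i j) (hij : i ≠ j) : (P i * P j).trace = m - dc ^ 2 := by
    rw [← hdc i j hij, chordalDist_sq_of_isSymm_of_isIdempotentElem (hP i).1 (hP j).1
      (hP i).2.1 (hP j).2.1, htr, htr]
    ring
  have hfirst : A * M = N * m := by
    simpa [htr, trace_sum] using (congrArg trace htight).symm
  have hsecond : A ^ 2 * M = N * m + N * (N - 1) * (m - dc ^ 2) := by
    have h := congrArg (fun X => (X * X).trace) htight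
    simp only [Finset.sum_mul_sum, trace_sum, smul_mul_smul_comm, mul_one, trace_smul,
      trace_one, smul_eq_mul] at h
    rw [Finset.sum_sum_eq_of_diag_of_offDiag (fun i => by rw [(hP i).2.1, htr]) hcross] at h
    simpa [sq] using h.symm
  exact eq_simplex_bound_of_trace_identities (by exact_mod_cast hM) (by exact_mod_cast hN)
    hfirst hsecond

/-- Let `N ≥ 2` and let `{W i}` be a tight fusion frame for `ℝ^M`
consisting of `m`-dimensional subspaces whose pairwise chordal distances all equal a
common value `d_c`.  Then `d_c² = (m(M−m)/M)(N/(N−1))`, the simplex bound. -/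
theorem equidistance_tight_meets_simplex_bound {M N : ℕ} (hN : 2 ≤ N) (hM : 0 < M)
    (A : ℝ) (hA : 0 < A)
    (W : Fin N → Submodule ℝ (Fin M → ℝ))
    (P : Fin N → Matrix (Fin M) (Fin M) ℝ)
    (hP : ∀ i, (P i).IsSymm ∧ P i * P i = P i ∧
      LinearMap.range (P i).mulVecLin = W i)
    (htight : ∑ i, P i = A • (1 : Matrix (Fin M) (Fin M) ℝ))
    (m : ℕ) (hdim : ∀ i, Module.finrank ℝ (W i) = m)
    (dc : ℝ) (hdc : ∀ i j, i ≠ j → chordalDist (P i) (P j) = dc) :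
    dc ^ 2 = ((m : ℝ) * ((M : ℝ) - (m : ℝ)) / (M : ℝ)) * ((N : ℝ) / ((N : ℝ) - 1)) :=
  equidistance_tight_meets_simplex_bound_general hN hM A W P hP htight m hdim dc hdc
end
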